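/- arXiv:2106.03880 — 2 statements merged into one kernel-verified Lean document; each statement's English description precedes it below -/
import Mathlib

section
/- For every m ≥ 1 and every tuple of points x₁, …, x_m ∈ [0,2π)^d, the empirical Rademacher complexity of the class H_Ω^{B̃} of generalized trigonometric polynomials satisfies R̂_{(x₁,…,x_m)}(H_Ω^{B̃}) ≤ B̃/√m + 2·B̃·√(|Ω|) · √(2·log(|Ω|)) / √m. -/
open Real MeasureTheory
open scoped ENNReal NNReal BigOperators

noncomputable section

/-- The domain `[0, 2π)^d`. -/
def box (d : ℕ) : Set (Fin d → ℝ) := Set.univ.pi fun _ => Set.Ico 0 (2 * π)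

/-- Euclidean dot product `ω · x`. -/
def dot {d : ℕ} (ω x : Fin d → ℝ) : ℝ := ∑ j, ω j * x j

/-- The sign `±1` associated with a Boolean. -/
def signOf (b : Bool) : ℝ := if b then 1 else -1

/-- Empirical Rademacher complexity of a class `F` of real-valued functions with
respect to the sample points `x₁, …, x_m`:
`2^{-m} Σ_{σ ∈ {−1,1}^m} sup_{f ∈ F} (1/m) Σ_i σ_i f(x_i)`. -/
def empRad {X : Type*} {m : ℕ} (F : Set (X → ℝ)) (x : Fin m → X) : ℝ :=
  (1 / 2 ^ m) * ∑ σ : Fin m → Bool,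
    sSup ((fun f => (1 / (m : ℝ)) * ∑ i, signOf (σ i) * f (x i)) '' F)

/-- The Euclidean 2-norm of the coefficient vector `(a₀, (a_ω)_{ω∈Ω₊}, (b_ω)_{ω∈Ω₊})`. -/
def coeffNorm2 {d : ℕ} (Ωp : Finset (Fin d → ℝ)) (a0 : ℝ) (a b : (Fin d → ℝ) → ℝ) : ℝ :=
  Real.sqrt (a0 ^ 2 + ∑ ω ∈ Ωp, (a ω ^ 2 + b ω ^ 2))

/-- The generalized trigonometric polynomial with frequencies in `Ω₊` and
coefficients `a₀, (a_ω), (b_ω)`: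
`x ↦ a₀/2 + Σ_{ω∈Ω₊} (a_ω cos(ω·x) + b_ω sin(ω·x))`. -/
def gtp {d : ℕ} (Ωp : Finset (Fin d → ℝ)) (a0 : ℝ) (a b : (Fin d → ℝ) → ℝ) :
    (Fin d → ℝ) → ℝ :=
  fun x => a0 / 2 + ∑ ω ∈ Ωp, (a ω * Real.cos (dot ω x) + b ω * Real.sin (dot ω x))

/-- The class `H_Ω^{B̃}` of generalized trigonometric polynomials with frequencies in `Ω₊`
whose coefficient vector has Euclidean 2-norm at most `B̃`. -/
def Hclass {d : ℕ} (Ωp : Finset (Fin d → ℝ)) (Bt : ℝ) : Set ((Fin d → ℝ) → ℝ) :=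
  { f | ∃ a0 a b, coeffNorm2 Ωp a0 a b ≤ Bt ∧ f = gtp Ωp a0 a b }

/-- `K = Σ_{i=1}^d max_{ω∈Ω₊} |ω_i|`. -/
def Kconst {d : ℕ} (Ωp : Finset (Fin d → ℝ)) (hne : Ωp.Nonempty) : ℝ :=
  ∑ i, Ωp.sup' hne fun ω => |ω i|

end

section Aux

lemma signOf_mul_self (b : Bool) : signOf b * signOf b = 1 := by cases b <;> simp [signOf]

lemma sum_sign_pair {m : ℕ} (i j : Fin m) (hij : i ≠ j) :
    ∑ σ : Fin m → Bool, signOf (σ i) * signOf (σ j) = 0 := by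
  classical
  apply Finset.sum_ninvolution (fun σ => Function.update σ i (!σ i))
  · intro σ
    rw [Function.update_self, Function.update_of_ne hij.symm]
    rcases Bool.dichotomy (σ i) with h | h <;> rcases Bool.dichotomy (σ j) with h2 | h2 <;>
      rw [h, h2] <;> norm_num [signOf]
  · intro σ _ hc
    have := congrFun hc i
    simp [Function.update_self] at this
  · intro σ; exact Finset.mem_univ _
  · intro σ
    funext k
    by_cases hk : k = i
    · subst hk; simp [Function.update_self]
    · simp [Function.update_of_ne hk]

lemma sum_sign_diag {m : ℕ} (i : Fin m) :
    ∑ σ : Fin m → Bool, signOf (σ i) * signOf (σ i) = 2 ^ m := by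
  simp [signOf_mul_self, Finset.card_univ]

lemma sum_sign_sq {m : ℕ} (g : Fin m → ℝ) :
    ∑ σ : Fin m → Bool, (∑ i, signOf (σ i) * g i) ^ 2 = 2 ^ m * ∑ i, g i ^ 2 := by
  classical
  have expand : ∀ σ : Fin m → Bool, (∑ i, signOf (σ i) * g i) ^ 2
      = ∑ i, ∑ j, (signOf (σ i) * signOf (σ j)) * (g i * g j) := by
    intro σ
    rw [sq, Finset.sum_mul_sum]
    exact Finset.sum_congr rfl fun i _ => Finset.sum_congr rfl fun j _ => by ring
  simp_rw [expand]
  rw [Finset.sum_comm]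
  have inner : ∀ i : Fin m, (∑ σ : Fin m → Bool, ∑ j,
      (signOf (σ i) * signOf (σ j)) * (g i * g j)) = 2 ^ m * g i ^ 2 := by
    intro i
    rw [Finset.sum_comm]
    have key : ∀ j : Fin m, (∑ σ : Fin m → Bool, (signOf (σ i) * signOf (σ j)) * (g i * g j))
        = (if i = j then (2:ℝ) ^ m else 0) * (g i * g j) := by
      intro j
      rw [← Finset.sum_mul]
      by_cases h : i = j
      · subst h; rw [sum_sign_diag, if_pos rfl]
      · rw [sum_sign_pair i j h, if_neg h]
    simp_rw [key]
    simp
    ring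
  simp_rw [inner]
  rw [← Finset.mul_sum]

lemma cs3 {d : ℕ} (Ωp : Finset (Fin d → ℝ)) (a0 A0 : ℝ) (a b A B : (Fin d → ℝ) → ℝ) :
    a0 * A0 + ∑ ω ∈ Ωp, (a ω * A ω + b ω * B ω) ≤
      Real.sqrt (a0 ^ 2 + ∑ ω ∈ Ωp, (a ω ^ 2 + b ω ^ 2)) *
      Real.sqrt (A0 ^ 2 + ∑ ω ∈ Ωp, (A ω ^ 2 + B ω ^ 2)) := by
  classical
  have h := Real.sum_mul_le_sqrt_mul_sqrt
    (Finset.insertNone (Ωp ×ˢ (Finset.univ : Finset Bool)))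
    (fun o => o.elim a0 (fun p => if p.2 then a p.1 else b p.1))
    (fun o => o.elim A0 (fun p => if p.2 then A p.1 else B p.1))
  simpa [Finset.sum_insertNone, Finset.sum_product, Fintype.sum_bool, add_comm,
    mul_comm] using h

/-- The σ-dependent "data norm squared". -/
noncomputable def Qval {d m : ℕ} (Ωp : Finset (Fin d → ℝ)) (x : Fin m → Fin d → ℝ)
    (σ : Fin m → Bool) : ℝ :=
  (∑ i, signOf (σ i) * (1/2 : ℝ)) ^ 2 +
    ∑ ω ∈ Ωp, ((∑ i, signOf (σ i) * Real.cos (dot ω (x i))) ^ 2 +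
               (∑ i, signOf (σ i) * Real.sin (dot ω (x i))) ^ 2)

lemma Qval_nonneg {d m : ℕ} (Ωp : Finset (Fin d → ℝ)) (x : Fin m → Fin d → ℝ)
    (σ : Fin m → Bool) : 0 ≤ Qval Ωp x σ := by
  unfold Qval
  positivity

lemma gtp_sum_expand {d m : ℕ} (Ωp : Finset (Fin d → ℝ)) (a0 : ℝ) (a b : (Fin d → ℝ) → ℝ)
    (σ : Fin m → Bool) (x : Fin m → Fin d → ℝ) :
    ∑ i, signOf (σ i) * gtp Ωp a0 a b (x i)
      = a0 * (∑ i, signOf (σ i) * (1/2 : ℝ))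
        + ∑ ω ∈ Ωp, (a ω * (∑ i, signOf (σ i) * Real.cos (dot ω (x i)))
            + b ω * (∑ i, signOf (σ i) * Real.sin (dot ω (x i)))) := by
  have step : ∀ i : Fin m, signOf (σ i) * gtp Ωp a0 a b (x i)
      = a0 * (signOf (σ i) * (1/2 : ℝ))
        + ∑ ω ∈ Ωp, (a ω * (signOf (σ i) * Real.cos (dot ω (x i)))
            + b ω * (signOf (σ i) * Real.sin (dot ω (x i)))) := by
    intro i
    simp only [gtp, mul_add, Finset.mul_sum]
    congr 1
    · ring
    · exact Finset.sum_congr rfl fun ω _ => by ring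
  rw [Finset.sum_congr rfl fun i _ => step i, Finset.sum_add_distrib, ← Finset.mul_sum,
    Finset.sum_comm]
  congr 1
  exact Finset.sum_congr rfl fun ω _ => by
    rw [Finset.sum_add_distrib, ← Finset.mul_sum, ← Finset.mul_sum]

lemma sum_Qval {d m : ℕ} (Ωp : Finset (Fin d → ℝ)) (x : Fin m → Fin d → ℝ) :
    ∑ σ : Fin m → Bool, Qval Ωp x σ = 2 ^ m * (m * (1/4 + (Ωp.card : ℝ))) := by
  classical
  unfold Qval
  rw [Finset.sum_add_distrib]
  have h1 : ∑ σ : Fin m → Bool, (∑ i, signOf (σ i) * (1/2 : ℝ)) ^ 2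
      = 2 ^ m * (m * (1/4 : ℝ)) := by
    rw [sum_sign_sq (fun _ => (1/2 : ℝ)), Finset.sum_const, Finset.card_univ, Fintype.card_fin,
      nsmul_eq_mul]
    ring
  have h2 : ∑ σ : Fin m → Bool, ∑ ω ∈ Ωp,
      ((∑ i, signOf (σ i) * Real.cos (dot ω (x i))) ^ 2 +
       (∑ i, signOf (σ i) * Real.sin (dot ω (x i))) ^ 2)
      = 2 ^ m * (m * (Ωp.card : ℝ)) := by
    rw [Finset.sum_comm]
    have hω : ∀ ω ∈ Ωp, (∑ σ : Fin m → Bool,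
        ((∑ i, signOf (σ i) * Real.cos (dot ω (x i))) ^ 2 +
         (∑ i, signOf (σ i) * Real.sin (dot ω (x i))) ^ 2)) = 2 ^ m * (m : ℝ) := by
      intro ω _
      rw [Finset.sum_add_distrib, sum_sign_sq (fun i => Real.cos (dot ω (x i))),
        sum_sign_sq (fun i => Real.sin (dot ω (x i))), ← mul_add, ← Finset.sum_add_distrib]
      have : ∀ i : Fin m, Real.cos (dot ω (x i)) ^ 2 + Real.sin (dot ω (x i)) ^ 2 = 1 :=
        fun i => Real.cos_sq_add_sin_sq _
      rw [Finset.sum_congr rfl fun i _ => this i]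
      simp [Finset.sum_const, Finset.card_univ]
    rw [Finset.sum_congr rfl hω, Finset.sum_const, nsmul_eq_mul]
    ring
  rw [h1, h2]
  ring

end Aux

/-- Empirical Rademacher complexity bound for the class `H_Ω^{B̃}` of
generalized trigonometric polynomials (Version 2), where `|Ω| = 2|Ω₊| + 1`:
`R̂_{(x₁,…,x_m)}(H_Ω^{B̃}) ≤ B̃/√m + 2·B̃·√|Ω|·√(2 log|Ω|)/√m`. -/
theorem rademacher_bound_gtp_v2
    (d : ℕ) (hd : 1 ≤ d) (Ωp : Finset (Fin d → ℝ)) (hne : Ωp.Nonempty)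
    (hzero : ∀ ω ∈ Ωp, ω ≠ 0) (hasym : ∀ ω ∈ Ωp, -ω ∉ Ωp)
    (Bt : ℝ) (hBt : 0 < Bt)
    (m : ℕ) (hm : 1 ≤ m) (x : Fin m → Fin d → ℝ) (hx : ∀ i, x i ∈ box d) :
    empRad (Hclass Ωp Bt) x ≤
      Bt / Real.sqrt m +
        2 * Bt * Real.sqrt (2 * Ωp.card + 1) *
          Real.sqrt (2 * Real.log (2 * Ωp.card + 1)) / Real.sqrt m := by
  classical
  have hm0 : (0 : ℝ) < m := by exact_mod_cast hm
  have hsm : (0 : ℝ) < Real.sqrt m := Real.sqrt_pos.mpr hm0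
  have hc1 : (1 : ℝ) ≤ (Ωp.card : ℝ) := by
    exact_mod_cast Finset.card_pos.mpr hne
  set c : ℝ := (Ωp.card : ℝ) with hc
  -- Step 1: bound each sSup
  have sup_le : ∀ σ : Fin m → Bool,
      sSup ((fun f => (1 / (m : ℝ)) * ∑ i, signOf (σ i) * f (x i)) '' Hclass Ωp Bt)
        ≤ (1 / (m : ℝ)) * (Bt * Real.sqrt (Qval Ωp x σ)) := by
    intro σ
    apply Real.sSup_le
    · rintro y ⟨f, hf, rfl⟩
      obtain ⟨a0, a, b, hnorm, rfl⟩ := hf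
      have h1 : ∑ i, signOf (σ i) * gtp Ωp a0 a b (x i) ≤ Bt * Real.sqrt (Qval Ωp x σ) := by
        rw [gtp_sum_expand]
        refine le_trans (cs3 Ωp a0 _ a b _ _) ?_
        have : Real.sqrt (a0 ^ 2 + ∑ ω ∈ Ωp, (a ω ^ 2 + b ω ^ 2)) ≤ Bt := hnorm
        exact mul_le_mul_of_nonneg_right this (Real.sqrt_nonneg _)
      exact mul_le_mul_of_nonneg_left h1 (by positivity)
    · positivity
  -- Step 2: sum the bounds
  have step2 : empRad (Hclass Ωp Bt) x
      ≤ (1 / 2 ^ m) * ∑ σ : Fin m → Bool, (1 / (m : ℝ)) * (Bt * Real.sqrt (Qval Ωp x σ)) := by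
    unfold empRad
    refine mul_le_mul_of_nonneg_left ?_ (by positivity)
    exact Finset.sum_le_sum fun σ _ => sup_le σ
  -- Step 3: Cauchy–Schwarz over σ
  have step3 : ∑ σ : Fin m → Bool, Real.sqrt (Qval Ωp x σ)
      ≤ Real.sqrt (2 ^ m * (m * (1/4 + c))) * Real.sqrt (2 ^ m) := by
    have h := Real.sum_mul_le_sqrt_mul_sqrt (Finset.univ : Finset (Fin m → Bool))
      (fun σ => Real.sqrt (Qval Ωp x σ)) (fun _ => (1 : ℝ))
    simp only [mul_one, one_pow] at h
    have hq : ∑ σ : Fin m → Bool, Real.sqrt (Qval Ωp x σ) ^ 2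
        = 2 ^ m * (m * (1/4 + c)) := by
      rw [Finset.sum_congr rfl fun σ _ => Real.sq_sqrt (Qval_nonneg Ωp x σ), sum_Qval]
    have hcard : ∑ _σ : Fin m → Bool, (1 : ℝ) = 2 ^ m := by
      simp [Finset.sum_const, Finset.card_univ]
    rw [hq, hcard] at h
    exact h
  -- Combine to the clean bound
  have main : empRad (Hclass Ωp Bt) x ≤ Bt * Real.sqrt (1/4 + c) / Real.sqrt m := by
    refine le_trans step2 ?_
    rw [← Finset.mul_sum, ← Finset.mul_sum]
    have h2m : (0:ℝ) < 2 ^ m := by positivity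
    have key : Real.sqrt (2 ^ m * (m * (1/4 + c))) * Real.sqrt (2 ^ m)
        = 2 ^ m * (Real.sqrt m * Real.sqrt (1/4 + c)) := by
      rw [Real.sqrt_mul (by positivity : (0:ℝ) ≤ (2:ℝ) ^ m),
        Real.sqrt_mul (le_of_lt hm0)]
      rw [show Real.sqrt (2 ^ m) * (Real.sqrt m * Real.sqrt (1/4 + c)) * Real.sqrt (2 ^ m)
          = (Real.sqrt (2 ^ m) * Real.sqrt (2 ^ m)) * (Real.sqrt m * Real.sqrt (1/4 + c))
          from by ring, Real.mul_self_sqrt (le_of_lt h2m)]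
    have hsum : ∑ σ : Fin m → Bool, Real.sqrt (Qval Ωp x σ)
        ≤ 2 ^ m * (Real.sqrt m * Real.sqrt (1/4 + c)) := by
      rw [← key]; exact step3
    calc (1 / 2 ^ m : ℝ) * ((1 / (m : ℝ)) * (Bt * ∑ σ : Fin m → Bool, Real.sqrt (Qval Ωp x σ)))
        ≤ (1 / 2 ^ m : ℝ) * ((1 / (m : ℝ)) * (Bt * (2 ^ m * (Real.sqrt m * Real.sqrt (1/4 + c))))) := by
          refine mul_le_mul_of_nonneg_left ?_ (by positivity)
          refine mul_le_mul_of_nonneg_left ?_ (by positivity)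
          exact mul_le_mul_of_nonneg_left hsum (le_of_lt hBt)
      _ = Bt * Real.sqrt (1/4 + c) * (Real.sqrt m / m) := by field_simp
      _ = Bt * Real.sqrt (1/4 + c) / Real.sqrt m := by
          rw [Real.sqrt_div_self']
          ring
  -- Final numeric comparison
  refine le_trans main ?_
  have hstep1 : Real.sqrt (1/4 + c) ≤ Real.sqrt (2 * c + 1) :=
    Real.sqrt_le_sqrt (by linarith)
  have hlog : (1 : ℝ) ≤ Real.log (2 * c + 1) := by
    rw [Real.le_log_iff_exp_le (by linarith)]
    calc Real.exp 1 ≤ 2.7182818286 := le_of_lt Real.exp_one_lt_d9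
      _ ≤ 2 * c + 1 := by linarith
  have hfac : (1 : ℝ) ≤ 2 * Real.sqrt (2 * Real.log (2 * c + 1)) := by
    have h1 : (1:ℝ) = Real.sqrt 1 := (Real.sqrt_one).symm
    have h2 : Real.sqrt 1 ≤ Real.sqrt (2 * Real.log (2 * c + 1)) :=
      Real.sqrt_le_sqrt (by linarith)
    nlinarith [Real.sqrt_nonneg (2 * Real.log (2 * c + 1))]
  have hmid : Bt * Real.sqrt (1/4 + c) / Real.sqrt m
      ≤ 2 * Bt * Real.sqrt (2 * c + 1) * Real.sqrt (2 * Real.log (2 * c + 1)) / Real.sqrt m := by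
    rw [div_le_div_iff₀ hsm hsm]
    have e1 : Bt * Real.sqrt (1/4 + c) ≤ Bt * Real.sqrt (2 * c + 1) :=
      mul_le_mul_of_nonneg_left hstep1 (le_of_lt hBt)
    have e2 : Bt * Real.sqrt (2 * c + 1)
        ≤ 2 * Bt * Real.sqrt (2 * c + 1) * Real.sqrt (2 * Real.log (2 * c + 1)) := by
      have hbs : 0 ≤ Bt * Real.sqrt (2 * c + 1) := by positivity
      nlinarith [hfac, hbs]
    have := le_trans e1 e2
    exact mul_le_mul_of_nonneg_right this (le_of_lt hsm)
  refine le_trans hmid ?_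
  have hpos : 0 ≤ Bt / Real.sqrt m := by positivity
  linarith
end

section
/- For every m ≥ 1 and every tuple of points x₁, …, x_m ∈ [0,2π)^d, the empirical Rademacher complexity of the class H_Ω^{B̃} of generalized trigonometric polynomials satisfies R̂_{(x₁,…,x_m)}(H_Ω^{B̃}) ≤ min{ (1/√m)·(2π·max{K, B̃·√(|Ω₊|)}·√(2·log(2d)) + max{π, B̃}), B̃/√m + 2·B̃·√(2·|Ω|·log(|Ω|))/√m }. -/
open Real MeasureTheory
open scoped ENNReal NNReal BigOperators

noncomputable section AuxLemmas

lemma signOf_sq (b : Bool) : signOf b ^ 2 = 1 := by cases b <;> simp [signOf]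

lemma signOf_not (b : Bool) : signOf (!b) = - signOf b := by cases b <;> simp [signOf]

lemma csineq {ι : Type*} (s : Finset ι) (f g : ι → ℝ) :
    ∑ i ∈ s, f i * g i ≤ Real.sqrt (∑ i ∈ s, f i ^ 2) * Real.sqrt (∑ i ∈ s, g i ^ 2) := by
  calc ∑ i ∈ s, f i * g i ≤ |∑ i ∈ s, f i * g i| := le_abs_self _
    _ = Real.sqrt ((∑ i ∈ s, f i * g i) ^ 2) := (Real.sqrt_sq_eq_abs _).symm
    _ ≤ Real.sqrt ((∑ i ∈ s, f i ^ 2) * ∑ i ∈ s, g i ^ 2) :=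
        Real.sqrt_le_sqrt (Finset.sum_mul_sq_le_sq_mul_sq s f g)
    _ = _ := Real.sqrt_mul (Finset.sum_nonneg fun _ _ => sq_nonneg _) _

lemma twoCS (a b c s : ℝ) : a * c + b * s ≤ Real.sqrt (a ^ 2 + b ^ 2) * Real.sqrt (c ^ 2 + s ^ 2) := by
  have h := csineq (Finset.univ : Finset Bool) (fun x => if x then a else b) (fun x => if x then c else s)
  simpa [Fintype.sum_bool] using h

lemma flip_invol {m : ℕ} (i : Fin m) :
    Function.Involutive (fun σ : Fin m → Bool => Function.update σ i (!σ i)) := by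
  intro σ
  funext k
  by_cases hk : k = i
  · subst hk; simp
  · simp [Function.update_apply, hk]

lemma sum_signOf_mul {m : ℕ} (i j : Fin m) :
    ∑ σ : Fin m → Bool, signOf (σ i) * signOf (σ j) =
      if i = j then ((2 : ℝ) ^ m) else 0 := by
  by_cases hij : i = j
  · subst hij
    simp only [if_pos rfl, ← sq, signOf_sq]
    simp [Finset.card_univ]
  · rw [if_neg hij]
    set g : (Fin m → Bool) → ℝ := fun σ => signOf (σ i) * signOf (σ j) with hg
    have h1 : ∑ σ : Fin m → Bool, g (Function.update σ i (!σ i)) = ∑ σ, g σ :=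
      Function.Bijective.sum_comp (flip_invol i).bijective g
    have h2 : ∀ σ : Fin m → Bool, g (Function.update σ i (!σ i)) = - g σ := by
      intro σ
      have hi : Function.update σ i (!σ i) i = !σ i := Function.update_self _ _ _
      have hj : Function.update σ i (!σ i) j = σ j := Function.update_of_ne (Ne.symm hij) _ _
      simp only [g, hi, hj, signOf_not]
      ring
    have h3 : ∑ σ : Fin m → Bool, g (Function.update σ i (!σ i)) = - ∑ σ, g σ := by
      rw [Finset.sum_congr rfl fun σ _ => h2 σ]
      exact Finset.sum_neg_distrib _
    have := h1.symm.trans h3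
    linarith

lemma sum_sq_signOf {m : ℕ} (c : Fin m → ℝ) :
    ∑ σ : Fin m → Bool, (∑ i, signOf (σ i) * c i) ^ 2 = 2 ^ m * ∑ i, c i ^ 2 := by
  have expand : ∀ σ : Fin m → Bool, (∑ i, signOf (σ i) * c i) ^ 2 =
      ∑ i, ∑ j, (signOf (σ i) * c i) * (signOf (σ j) * c j) := by
    intro σ; rw [sq, Finset.sum_mul_sum]
  calc ∑ σ : Fin m → Bool, (∑ i, signOf (σ i) * c i) ^ 2
      = ∑ σ : Fin m → Bool, ∑ i, ∑ j, (signOf (σ i) * c i) * (signOf (σ j) * c j) :=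
        Finset.sum_congr rfl fun σ _ => expand σ
    _ = ∑ i, ∑ j, ∑ σ : Fin m → Bool, (signOf (σ i) * c i) * (signOf (σ j) * c j) := by
        rw [Finset.sum_comm]
        exact Finset.sum_congr rfl fun i _ => Finset.sum_comm
    _ = ∑ i, ∑ j, c i * c j * (if i = j then ((2:ℝ) ^ m) else 0) := by
        refine Finset.sum_congr rfl fun i _ => Finset.sum_congr rfl fun j _ => ?_
        rw [← sum_signOf_mul i j, Finset.mul_sum]
        exact Finset.sum_congr rfl fun σ _ => by ring
    _ = ∑ i, c i * c i * 2 ^ m := by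
        refine Finset.sum_congr rfl fun i _ => ?_
        simp [mul_ite]
    _ = 2 ^ m * ∑ i, c i ^ 2 := by
        rw [Finset.mul_sum]
        exact Finset.sum_congr rfl fun i _ => by ring


/-- The quantity `T_σ`. -/
def Tt {d m : ℕ} (Ωp : Finset (Fin d → ℝ)) (x : Fin m → Fin d → ℝ) (σ : Fin m → Bool) : ℝ :=
  ((∑ i, signOf (σ i)) / 2) ^ 2 +
    ∑ ω ∈ Ωp, ((∑ i, signOf (σ i) * Real.cos (dot ω (x i))) ^ 2 +
               (∑ i, signOf (σ i) * Real.sin (dot ω (x i))) ^ 2)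

lemma Tt_nonneg {d m : ℕ} (Ωp : Finset (Fin d → ℝ)) (x : Fin m → Fin d → ℝ)
    (σ : Fin m → Bool) : 0 ≤ Tt Ωp x σ := by
  unfold Tt
  positivity

lemma pairing_eq {d m : ℕ} (Ωp : Finset (Fin d → ℝ)) (x : Fin m → Fin d → ℝ)
    (σ : Fin m → Bool) (a0 : ℝ) (a b : (Fin d → ℝ) → ℝ) :
    ∑ i, signOf (σ i) * gtp Ωp a0 a b (x i) =
      a0 * ((∑ i, signOf (σ i)) / 2) +
        ∑ ω ∈ Ωp, (a ω * (∑ i, signOf (σ i) * Real.cos (dot ω (x i))) +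
                   b ω * (∑ i, signOf (σ i) * Real.sin (dot ω (x i)))) := by
  have step : ∀ i, signOf (σ i) * gtp Ωp a0 a b (x i) =
      signOf (σ i) * (a0 / 2) +
        ∑ ω ∈ Ωp, (a ω * (signOf (σ i) * Real.cos (dot ω (x i))) +
                   b ω * (signOf (σ i) * Real.sin (dot ω (x i)))) := by
    intro i
    simp only [gtp, mul_add, Finset.mul_sum]
    congr 1
    exact Finset.sum_congr rfl fun ω _ => by ring
  calc ∑ i, signOf (σ i) * gtp Ωp a0 a b (x i)
      = ∑ i, (signOf (σ i) * (a0 / 2) +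
          ∑ ω ∈ Ωp, (a ω * (signOf (σ i) * Real.cos (dot ω (x i))) +
                     b ω * (signOf (σ i) * Real.sin (dot ω (x i))))) :=
        Finset.sum_congr rfl fun i _ => step i
    _ = (∑ i, signOf (σ i) * (a0 / 2)) +
          ∑ ω ∈ Ωp, ∑ i, (a ω * (signOf (σ i) * Real.cos (dot ω (x i))) +
                     b ω * (signOf (σ i) * Real.sin (dot ω (x i)))) := by
        rw [Finset.sum_add_distrib]
        congr 1
        exact Finset.sum_comm
    _ = a0 * ((∑ i, signOf (σ i)) / 2) +
        ∑ ω ∈ Ωp, (a ω * (∑ i, signOf (σ i) * Real.cos (dot ω (x i))) +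
                   b ω * (∑ i, signOf (σ i) * Real.sin (dot ω (x i)))) := by
        congr 1
        · rw [← Finset.sum_mul]; ring
        · refine Finset.sum_congr rfl fun ω _ => ?_
          rw [Finset.sum_add_distrib, ← Finset.mul_sum, ← Finset.mul_sum]

lemma pair_le {d m : ℕ} (Ωp : Finset (Fin d → ℝ)) (x : Fin m → Fin d → ℝ)
    (σ : Fin m → Bool) (Bt : ℝ) (f : (Fin d → ℝ) → ℝ) (hf : f ∈ Hclass Ωp Bt) :
    ∑ i, signOf (σ i) * f (x i) ≤ Bt * Real.sqrt (Tt Ωp x σ) := by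
  obtain ⟨a0, a, b, hnorm, rfl⟩ := hf
  set u0 : ℝ := (∑ i, signOf (σ i)) / 2 with hu0
  set C : (Fin d → ℝ) → ℝ := fun ω => ∑ i, signOf (σ i) * Real.cos (dot ω (x i)) with hC
  set S : (Fin d → ℝ) → ℝ := fun ω => ∑ i, signOf (σ i) * Real.sin (dot ω (x i)) with hS
  have hTT : Tt Ωp x σ = u0 ^ 2 + ∑ ω ∈ Ωp, (C ω ^ 2 + S ω ^ 2) := rfl
  rw [pairing_eq]
  have h1 : ∑ ω ∈ Ωp, (a ω * C ω + b ω * S ω) ≤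
      Real.sqrt (∑ ω ∈ Ωp, (a ω ^ 2 + b ω ^ 2)) *
        Real.sqrt (∑ ω ∈ Ωp, (C ω ^ 2 + S ω ^ 2)) := by
    have h2 : ∀ ω ∈ Ωp, a ω * C ω + b ω * S ω ≤
        Real.sqrt (a ω ^ 2 + b ω ^ 2) * Real.sqrt (C ω ^ 2 + S ω ^ 2) := fun ω _ =>
      twoCS _ _ _ _
    calc ∑ ω ∈ Ωp, (a ω * C ω + b ω * S ω)
        ≤ ∑ ω ∈ Ωp, Real.sqrt (a ω ^ 2 + b ω ^ 2) * Real.sqrt (C ω ^ 2 + S ω ^ 2) :=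
          Finset.sum_le_sum h2
      _ ≤ Real.sqrt (∑ ω ∈ Ωp, Real.sqrt (a ω ^ 2 + b ω ^ 2) ^ 2) *
            Real.sqrt (∑ ω ∈ Ωp, Real.sqrt (C ω ^ 2 + S ω ^ 2) ^ 2) := csineq _ _ _
      _ = Real.sqrt (∑ ω ∈ Ωp, (a ω ^ 2 + b ω ^ 2)) *
            Real.sqrt (∑ ω ∈ Ωp, (C ω ^ 2 + S ω ^ 2)) := by
          congr 1 <;> congr 1 <;>
            exact Finset.sum_congr rfl fun ω _ => Real.sq_sqrt (by positivity)
  have h3 : a0 * u0 + ∑ ω ∈ Ωp, (a ω * C ω + b ω * S ω) ≤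
      Real.sqrt (a0 ^ 2 + ∑ ω ∈ Ωp, (a ω ^ 2 + b ω ^ 2)) *
        Real.sqrt (u0 ^ 2 + ∑ ω ∈ Ωp, (C ω ^ 2 + S ω ^ 2)) := by
    have h4 := twoCS a0 (Real.sqrt (∑ ω ∈ Ωp, (a ω ^ 2 + b ω ^ 2))) u0
      (Real.sqrt (∑ ω ∈ Ωp, (C ω ^ 2 + S ω ^ 2)))
    rw [Real.sq_sqrt (by positivity), Real.sq_sqrt (by positivity)] at h4
    linarith
  have h5 : Real.sqrt (a0 ^ 2 + ∑ ω ∈ Ωp, (a ω ^ 2 + b ω ^ 2)) ≤ Bt := hnorm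
  calc a0 * u0 + ∑ ω ∈ Ωp, (a ω * C ω + b ω * S ω)
      ≤ Real.sqrt (a0 ^ 2 + ∑ ω ∈ Ωp, (a ω ^ 2 + b ω ^ 2)) *
          Real.sqrt (u0 ^ 2 + ∑ ω ∈ Ωp, (C ω ^ 2 + S ω ^ 2)) := h3
    _ ≤ Bt * Real.sqrt (u0 ^ 2 + ∑ ω ∈ Ωp, (C ω ^ 2 + S ω ^ 2)) := by
        apply mul_le_mul_of_nonneg_right h5 (Real.sqrt_nonneg _)
    _ = Bt * Real.sqrt (Tt Ωp x σ) := by rw [hTT]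

lemma sum_Tt {d m : ℕ} (Ωp : Finset (Fin d → ℝ)) (x : Fin m → Fin d → ℝ) :
    ∑ σ : Fin m → Bool, Tt Ωp x σ = 2 ^ m * ((m : ℝ) * ((Ωp.card : ℝ) + 1 / 4)) := by
  unfold Tt
  rw [Finset.sum_add_distrib]
  have h1 : ∑ σ : Fin m → Bool, ((∑ i, signOf (σ i)) / 2) ^ 2 =
      2 ^ m * ((m : ℝ) / 4) := by
    have := sum_sq_signOf (m := m) (fun _ => (1 : ℝ))
    simp only [mul_one, one_pow] at this
    calc ∑ σ : Fin m → Bool, ((∑ i, signOf (σ i)) / 2) ^ 2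
        = (∑ σ : Fin m → Bool, (∑ i, signOf (σ i)) ^ 2) / 4 := by
          rw [Finset.sum_div]
          exact Finset.sum_congr rfl fun σ _ => by ring
      _ = 2 ^ m * ((m : ℝ) / 4) := by rw [this]; simp; ring
  have h2 : ∑ σ : Fin m → Bool, ∑ ω ∈ Ωp,
      ((∑ i, signOf (σ i) * Real.cos (dot ω (x i))) ^ 2 +
       (∑ i, signOf (σ i) * Real.sin (dot ω (x i))) ^ 2) =
      (Ωp.card : ℝ) * (2 ^ m * (m : ℝ)) := by
    rw [Finset.sum_comm]
    have h3 : ∀ ω ∈ Ωp, ∑ σ : Fin m → Bool,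
        ((∑ i, signOf (σ i) * Real.cos (dot ω (x i))) ^ 2 +
         (∑ i, signOf (σ i) * Real.sin (dot ω (x i))) ^ 2) = 2 ^ m * (m : ℝ) := by
      intro ω _
      rw [Finset.sum_add_distrib, sum_sq_signOf, sum_sq_signOf, ← mul_add,
        ← Finset.sum_add_distrib]
      have : ∑ i : Fin m, (Real.cos (dot ω (x i)) ^ 2 + Real.sin (dot ω (x i)) ^ 2) =
          (m : ℝ) := by
        simp [Real.cos_sq_add_sin_sq]
      rw [this]
    rw [Finset.sum_congr rfl h3, Finset.sum_const, nsmul_eq_mul]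
  rw [h1, h2]
  ring

end AuxLemmas


lemma empRad_le_key {d m : ℕ} (Ωp : Finset (Fin d → ℝ)) (Bt : ℝ) (hBt : 0 < Bt)
    (hm : 1 ≤ m) (x : Fin m → Fin d → ℝ) :
    empRad (Hclass Ωp Bt) x ≤
      Bt * Real.sqrt ((Ωp.card : ℝ) + 1 / 4) / Real.sqrt m := by
  have hm' : (0 : ℝ) < m := by exact_mod_cast hm
  set q : ℝ := (Ωp.card : ℝ) with hq
  have per : ∀ σ : Fin m → Bool,
      sSup ((fun f => (1 / (m : ℝ)) * ∑ i, signOf (σ i) * f (x i)) '' Hclass Ωp Bt) ≤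
        (1 / (m : ℝ)) * (Bt * Real.sqrt (Tt Ωp x σ)) := by
    intro σ
    apply Real.sSup_le
    · rintro y ⟨f, hf, rfl⟩
      exact mul_le_mul_of_nonneg_left (pair_le Ωp x σ Bt f hf) (by positivity)
    · positivity
  have sumsqrt : ∑ σ : Fin m → Bool, Real.sqrt (Tt Ωp x σ) ≤
      Real.sqrt ((2 : ℝ) ^ m) * Real.sqrt (∑ σ : Fin m → Bool, Tt Ωp x σ) := by
    have h := csineq (Finset.univ : Finset (Fin m → Bool)) (fun _ => (1 : ℝ))
      (fun σ => Real.sqrt (Tt Ωp x σ))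
    have hcard : ∑ _σ : Fin m → Bool, (1 : ℝ) ^ 2 = (2 : ℝ) ^ m := by simp
    have hsq : ∑ σ : Fin m → Bool, Real.sqrt (Tt Ωp x σ) ^ 2 =
        ∑ σ : Fin m → Bool, Tt Ωp x σ :=
      Finset.sum_congr rfl fun σ _ => Real.sq_sqrt (Tt_nonneg Ωp x σ)
    simpa [hcard, hsq] using h
  have main : empRad (Hclass Ωp Bt) x ≤
      (1 / 2 ^ m) * ((Bt / m) * (Real.sqrt ((2 : ℝ) ^ m) *
        Real.sqrt ((2 : ℝ) ^ m * ((m : ℝ) * (q + 1 / 4))))) := by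
    unfold empRad
    calc (1 / 2 ^ m : ℝ) * ∑ σ : Fin m → Bool,
          sSup ((fun f => (1 / (m : ℝ)) * ∑ i, signOf (σ i) * f (x i)) '' Hclass Ωp Bt)
        ≤ (1 / 2 ^ m : ℝ) * ∑ σ : Fin m → Bool,
            (1 / (m : ℝ)) * (Bt * Real.sqrt (Tt Ωp x σ)) := by
          apply mul_le_mul_of_nonneg_left (Finset.sum_le_sum fun σ _ => per σ)
          positivity
      _ = (1 / 2 ^ m : ℝ) * ((Bt / m) * ∑ σ : Fin m → Bool, Real.sqrt (Tt Ωp x σ)) := by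
          rw [Finset.mul_sum, Finset.mul_sum, Finset.mul_sum]
          exact Finset.sum_congr rfl fun σ _ => by ring
      _ ≤ (1 / 2 ^ m : ℝ) * ((Bt / m) * (Real.sqrt ((2 : ℝ) ^ m) *
            Real.sqrt (∑ σ : Fin m → Bool, Tt Ωp x σ))) := by
          apply mul_le_mul_of_nonneg_left _ (by positivity)
          apply mul_le_mul_of_nonneg_left sumsqrt (by positivity)
      _ = (1 / 2 ^ m : ℝ) * ((Bt / m) * (Real.sqrt ((2 : ℝ) ^ m) *
            Real.sqrt ((2 : ℝ) ^ m * ((m : ℝ) * (q + 1 / 4))))) := by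
          rw [sum_Tt]
  refine main.trans (le_of_eq ?_)
  have h2m : Real.sqrt ((2 : ℝ) ^ m) * Real.sqrt ((2 : ℝ) ^ m) = (2 : ℝ) ^ m :=
    Real.mul_self_sqrt (by positivity)
  have hmm : Real.sqrt (m : ℝ) * Real.sqrt (m : ℝ) = (m : ℝ) :=
    Real.mul_self_sqrt hm'.le
  have hsm : (0 : ℝ) < Real.sqrt m := Real.sqrt_pos.mpr hm'
  rw [Real.sqrt_mul (by positivity), Real.sqrt_mul hm'.le]
  have key : (1:ℝ)/2^m * (Bt/(m:ℝ) * (Real.sqrt ((2:ℝ)^m) * (Real.sqrt ((2:ℝ)^m) *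
      (Real.sqrt (m:ℝ) * Real.sqrt (q+1/4))))) =
      (Real.sqrt ((2:ℝ)^m) * Real.sqrt ((2:ℝ)^m))/2^m *
        ((Bt * Real.sqrt (q+1/4) * Real.sqrt (m:ℝ))/(Real.sqrt (m:ℝ) * Real.sqrt (m:ℝ))) := by
    rw [hmm]; ring
  rw [key, h2m, div_self (ne_of_gt (by positivity : (0:ℝ) < 2^m)), one_mul,
    mul_div_mul_right _ _ (ne_of_gt hsm)]


/-- Combined empirical Rademacher complexity bound for `H_Ω^{B̃}`
(minimum of the two versions), where `|Ω| = 2|Ω₊| + 1`. -/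
theorem rademacher_bound_gtp_combined
    (d : ℕ) (hd : 1 ≤ d) (Ωp : Finset (Fin d → ℝ)) (hne : Ωp.Nonempty)
    (hzero : ∀ ω ∈ Ωp, ω ≠ 0) (hasym : ∀ ω ∈ Ωp, -ω ∉ Ωp)
    (Bt : ℝ) (hBt : 0 < Bt)
    (m : ℕ) (hm : 1 ≤ m) (x : Fin m → Fin d → ℝ) (hx : ∀ i, x i ∈ box d) :
    empRad (Hclass Ωp Bt) x ≤
      min
        ((1 / Real.sqrt m) *
          (2 * π * max (Kconst Ωp hne) (Bt * Real.sqrt Ωp.card) *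
              Real.sqrt (2 * Real.log (2 * d)) +
            max π Bt))
        (Bt / Real.sqrt m +
          2 * Bt *
            Real.sqrt (2 * (2 * Ωp.card + 1) * Real.log (2 * Ωp.card + 1)) /
              Real.sqrt m) := by
  have hq1' : 1 ≤ Ωp.card := hne.card_pos
  have hq1 : (1 : ℝ) ≤ (Ωp.card : ℝ) := by exact_mod_cast hq1'
  have hm' : (0 : ℝ) < m := by exact_mod_cast hm
  have hsm : (0 : ℝ) < Real.sqrt m := Real.sqrt_pos.mpr hm'
  have hkey := empRad_le_key Ωp Bt hBt hm x
  set q : ℝ := (Ωp.card : ℝ) with hq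
  refine hkey.trans (le_min ?_ ?_)
  · -- first bound
    have hd1 : (1 : ℝ) ≤ (d : ℝ) := by exact_mod_cast hd
    have hexp : Real.exp (1 / 2) ≤ 2 := by
      have h2 : Real.exp (1 / 2) * Real.exp (1 / 2) = Real.exp 1 := by
        rw [← Real.exp_add]; norm_num
      nlinarith [Real.exp_pos ((1 : ℝ) / 2), Real.exp_one_lt_d9,
        (by norm_num : (2.7182818286 : ℝ) ≤ 4)]
    have hlog2d : (1 : ℝ) / 2 ≤ Real.log (2 * d) := by
      rw [Real.le_log_iff_exp_le (by linarith : (0 : ℝ) < 2 * d)]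
      linarith
    have hsq2 : (1 : ℝ) ≤ Real.sqrt (2 * Real.log (2 * d)) := by
      rw [show (1 : ℝ) = Real.sqrt 1 from Real.sqrt_one.symm]
      exact Real.sqrt_le_sqrt (by linarith)
    have hpi := Real.pi_gt_three
    have hM : 0 ≤ max (Kconst Ωp hne) (Bt * Real.sqrt q) :=
      le_trans (by positivity) (le_max_right _ _)
    have hcoef : (1 : ℝ) ≤ 2 * π * Real.sqrt (2 * Real.log (2 * d)) := by
      nlinarith [hsq2, hpi]
    have h14 : Real.sqrt (q + 1 / 4) ≤ Real.sqrt q + 1 / 2 := by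
      rw [Real.sqrt_le_iff]
      constructor
      · positivity
      · nlinarith [Real.sq_sqrt (show (0 : ℝ) ≤ q by positivity), Real.sqrt_nonneg q]
    have core : Bt * Real.sqrt (q + 1 / 4) ≤
        2 * π * max (Kconst Ωp hne) (Bt * Real.sqrt q) *
          Real.sqrt (2 * Real.log (2 * d)) + max π Bt := by
      have e1 : Bt * Real.sqrt (q + 1 / 4) ≤ Bt * (Real.sqrt q + 1 / 2) :=
        mul_le_mul_of_nonneg_left h14 hBt.le
      have e2 : Bt * Real.sqrt q ≤ max (Kconst Ωp hne) (Bt * Real.sqrt q) :=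
        le_max_right _ _
      have e3 : max (Kconst Ωp hne) (Bt * Real.sqrt q) ≤
          2 * π * Real.sqrt (2 * Real.log (2 * d)) *
            max (Kconst Ωp hne) (Bt * Real.sqrt q) :=
        le_mul_of_one_le_left hM hcoef
      have e4 : Bt ≤ max π Bt := le_max_right _ _
      have e5 : 2 * π * Real.sqrt (2 * Real.log (2 * d)) *
            max (Kconst Ωp hne) (Bt * Real.sqrt q) =
          2 * π * max (Kconst Ωp hne) (Bt * Real.sqrt q) *
            Real.sqrt (2 * Real.log (2 * d)) := by ring
      nlinarith [e1, e2, e3, e4, e5]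
    have hrw : Bt * Real.sqrt (q + 1 / 4) / Real.sqrt m =
        (1 / Real.sqrt m) * (Bt * Real.sqrt (q + 1 / 4)) := by ring
    rw [hrw]
    exact mul_le_mul_of_nonneg_left core (by positivity)
  · -- second bound
    have hN : (3 : ℝ) ≤ 2 * q + 1 := by linarith
    have hexp1 : Real.exp 1 ≤ 3 := by
      nlinarith [Real.exp_one_lt_d9, (by norm_num : (2.7182818286 : ℝ) ≤ 3)]
    have hlogN : (1 : ℝ) ≤ Real.log (2 * q + 1) := by
      rw [Real.le_log_iff_exp_le (by linarith)]
      linarith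
    have hle : Real.sqrt (q + 1 / 4) ≤
        Real.sqrt (2 * (2 * q + 1) * Real.log (2 * q + 1)) :=
      Real.sqrt_le_sqrt (by nlinarith [hlogN, hq1])
    have h1 : Bt * Real.sqrt (q + 1 / 4) / Real.sqrt m ≤
        Bt * Real.sqrt (2 * (2 * q + 1) * Real.log (2 * q + 1)) / Real.sqrt m := by
      gcongr
    have h2 : (0 : ℝ) ≤ Bt / Real.sqrt m := by positivity
    have h3 : (0 : ℝ) ≤
        Bt * Real.sqrt (2 * (2 * q + 1) * Real.log (2 * q + 1)) / Real.sqrt m := by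
      positivity
    have h4 : Bt * Real.sqrt (2 * (2 * q + 1) * Real.log (2 * q + 1)) / Real.sqrt m ≤
        2 * Bt * Real.sqrt (2 * (2 * q + 1) * Real.log (2 * q + 1)) / Real.sqrt m := by
      rw [div_le_div_iff₀ hsm hsm]
      nlinarith [mul_nonneg (mul_nonneg hBt.le
        (Real.sqrt_nonneg (2 * (2 * q + 1) * Real.log (2 * q + 1)))) hsm.le]
    linarith [h1, h2, h4]
end
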